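/- Let Σ be a finite alphabet, Σ_uc ⊆ Σ, M ⊆ Σ^* a prefix-closed language, and L ⊆ M a prefix-closed language. Define the iteration K_1 = L and K_{j+1} = K_j − ((M − K_j)/Σ_uc)·Σ^* for j ≥ 1, where (M − K_j)/Σ_uc = {s ∈ Σ^* : ∃σ ∈ Σ_uc, sσ ∈ M − K_j}. Then every K_j is prefix-closed, the sequence is decreasing and each K_j contains sup C(L), and if K_{N+1} = K_N for some N, then K_N = sup C(L), the supremal controllable sublanguage of L with respect to M and Σ_uc. -/

import Mathlib

/-- Natural projection: delete every letter not in `A`. -/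
noncomputable def natProj {α : Type*} (A : Set α) (w : List α) : List α :=
  w.filter (fun a => @decide (a ∈ A) (Classical.propDecidable _))

/-- Words all of whose letters lie in `A` (i.e. `A^*`). -/
def wordsOver {α : Type*} (A : Set α) : Set (List α) := {w | ∀ a ∈ w, a ∈ A}

/-- Inverse projection of a language `K` over the subalphabet `A`. -/
def invProj {α : Type*} (A : Set α) (K : Set (List α)) : Set (List α) :=
  {t | natProj A t ∈ K}

/-- A language is prefix-closed if every prefix of every word in it belongs to it. -/
def PrefixClosed {α : Type*} (L : Set (List α)) : Prop :=
  ∀ u v : List α, u <+: v → v ∈ L → u ∈ L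

/-- Concatenation of two languages: `A·B = {st : s ∈ A, t ∈ B}`. -/
def catL {α : Type*} (A B : Set (List α)) : Set (List α) :=
  {w | ∃ s ∈ A, ∃ t ∈ B, w = s ++ t}

/-- One-letter extension: `K·E = {sσ : s ∈ K, σ ∈ E}`. -/
def extL {α : Type*} (K : Set (List α)) (E : Set α) : Set (List α) :=
  {w | ∃ s ∈ K, ∃ σ ∈ E, w = s ++ [σ]}

/-- Quotient of languages: `L₁/L₂ = {s : ∃ t ∈ L₂, st ∈ L₁}`. -/
def quotL {α : Type*} (L₁ L₂ : Set (List α)) : Set (List α) :=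
  {s | ∃ t ∈ L₂, s ++ t ∈ L₁}

/-- Prefix closure of a language. -/
def preL {α : Type*} (K : Set (List α)) : Set (List α) :=
  {u | ∃ w ∈ K, u <+: w}

/-- `K` is controllable w.r.t. the plant language `M` and uncontrollable events `Suc`:
`pre(K)·Σ_uc ∩ M ⊆ pre(K)`. -/
def Controllable {α : Type*} (M : Set (List α)) (Suc : Set α) (K : Set (List α)) : Prop :=
  extL (preL K) Suc ∩ M ⊆ preL K

/-- The supremal controllable sublanguage of `L` w.r.t. `M` and `Suc`:
the union of all controllable sublanguages of `L`. -/
def supC {α : Type*} (M : Set (List α)) (Suc : Set α) (L : Set (List α)) : Set (List α) :=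
  ⋃₀ {K | K ⊆ L ∧ Controllable M Suc K}

/-!
A word is removed in a step exactly when one of its prefixes `s` can leave the current language
`K` inside `M` by an uncontrollable event. A controllable sublanguage of a prefix-closed `K` never
contains such a word, so `sup C(L)` survives every step; conversely a fixed point of the step has
no such prefix at all, hence is itself controllable, and it lies in `L`.
-/

section SupCIteration

variable {α : Type*} {M K L : Set (List α)} {Suc : Set α}

variable (M Suc) in
def supCStep (K : Set (List α)) : Set (List α) :=
  K \ catL {s | ∃ σ ∈ Suc, s ++ [σ] ∈ M \ K} Set.univ

theorem PrefixClosed.preL_subset (hK : PrefixClosed K) : preL K ⊆ K := by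
  rintro u ⟨w, hw, huw⟩
  exact hK u w huw hw

theorem PrefixClosed.diff_catL_univ (hK : PrefixClosed K) (A : Set (List α)) :
    PrefixClosed (K \ catL A Set.univ) := by
  rintro u v ⟨r, rfl⟩ ⟨hv, hvA⟩
  refine ⟨hK u _ (List.prefix_append u r) hv, ?_⟩
  rintro ⟨s, hs, t, -, rfl⟩
  exact hvA ⟨s, hs, t ++ r, trivial, List.append_assoc s t r⟩

theorem supC_subset_self : supC M Suc L ⊆ L :=
  Set.sUnion_subset fun _ hC => hC.1

theorem subset_supC (hKL : K ⊆ L) (hK : Controllable M Suc K) : K ⊆ supC M Suc L :=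
  Set.subset_sUnion_of_mem ⟨hKL, hK⟩

theorem Controllable.subset_supCStep {C : Set (List α)} (hC : Controllable M Suc C)
    (hK : PrefixClosed K) (hCK : C ⊆ K) : C ⊆ supCStep M Suc K := by
  rintro w hw
  refine ⟨hCK hw, ?_⟩
  rintro ⟨s, ⟨σ, hσ, hsσM, hsσK⟩, t, -, rfl⟩
  have hs : s ∈ preL C := ⟨s ++ t, hw, List.prefix_append s t⟩
  obtain ⟨w', hw', hsσw'⟩ := hC ⟨⟨s, hs, σ, hσ, rfl⟩, hsσM⟩
  exact hsσK (hK _ w' hsσw' (hCK hw'))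

theorem supC_subset_supCStep (hK : PrefixClosed K) (h : supC M Suc L ⊆ K) :
    supC M Suc L ⊆ supCStep M Suc K :=
  Set.sUnion_subset fun _ hC =>
    hC.2.subset_supCStep hK ((Set.subset_sUnion_of_mem hC).trans h)

theorem controllable_of_supCStep_eq (hK : PrefixClosed K) (h : supCStep M Suc K = K) :
    Controllable M Suc K := by
  rintro _ ⟨⟨s, hs, σ, hσ, rfl⟩, hsσM⟩
  have hsK : s ∈ supCStep M Suc K := by rw [h]; exact hK.preL_subset hs
  by_contra hsσ
  exact hsK.2 ⟨s, ⟨σ, hσ, hsσM, fun h' => hsσ ⟨_, h', List.prefix_refl _⟩⟩, [], trivial,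
    (List.append_nil s).symm⟩

end SupCIteration

theorem stmt_16_general {α : Type*} (Suc : Set α) (M L : Set (List α))
    (hL : PrefixClosed L)
    (K : ℕ → Set (List α)) (hK1 : K 1 = L)
    (hKs : ∀ j, 1 ≤ j → K (j + 1) =
      K j \ catL {s | ∃ σ ∈ Suc, s ++ [σ] ∈ M \ K j} Set.univ) :
    (∀ j, 1 ≤ j → PrefixClosed (K j) ∧ K (j + 1) ⊆ K j ∧ supC M Suc L ⊆ K j) ∧
      ∀ N, 1 ≤ N → K (N + 1) = K N → K N = supC M Suc L := by
  have hstep : ∀ j, 1 ≤ j → K (j + 1) = supCStep M Suc (K j) := hKs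
  have inv : ∀ j, 1 ≤ j → PrefixClosed (K j) ∧ supC M Suc L ⊆ K j ∧ K j ⊆ L := by
    intro j hj
    induction j, hj using Nat.le_induction with
    | base => rw [hK1]; exact ⟨hL, supC_subset_self, subset_rfl⟩
    | succ j hj ih =>
      obtain ⟨hpc, hsup, hsub⟩ := ih
      rw [hstep j hj]
      exact ⟨hpc.diff_catL_univ _, supC_subset_supCStep hpc hsup, Set.sdiff_subset.trans hsub⟩
  refine ⟨fun j hj => ⟨(inv j hj).1, hstep j hj ▸ Set.sdiff_subset, (inv j hj).2.1⟩, ?_⟩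
  intro N hN hfix
  obtain ⟨hpc, hsup, hsub⟩ := inv N hN
  rw [hstep N hN] at hfix
  exact (subset_supC hsub (controllable_of_supCStep_eq hpc hfix)).antisymm hsup

/-- Lemma 1 (equations (9)-(10)), prefix-closed case: the iteration
`K₁ = L`, `K_{j+1} = K_j − ((M − K_j)/Σ_uc)·Σ^*` produces a decreasing sequence of
prefix-closed languages each containing `sup C(L)`, and any fixed point of the
iteration equals `sup C(L)`. -/
theorem stmt_16 {α : Type*} [Fintype α] (Suc : Set α) (M L : Set (List α))
    (hM : PrefixClosed M) (hL : PrefixClosed L) (hLM : L ⊆ M)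
    (K : ℕ → Set (List α)) (hK1 : K 1 = L)
    (hKs : ∀ j, 1 ≤ j → K (j + 1) =
      K j \ catL {s | ∃ σ ∈ Suc, s ++ [σ] ∈ M \ K j} Set.univ) :
    (∀ j, 1 ≤ j → PrefixClosed (K j) ∧ K (j + 1) ⊆ K j ∧ supC M Suc L ⊆ K j) ∧
      ∀ N, 1 ≤ N → K (N + 1) = K N → K N = supC M Suc L :=
  stmt_16_general Suc M L hL K hK1 hKs
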